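/- Let (Ω, F, μ) be a probability space, let G ⊆ F be a sub-σ-algebra, let κ, θ, σ > 0 with α := (4κθ − σ²)/8 ≥ 0, and let h > 0. Let x : Ω → ℝ be G-measurable, nonnegative and integrable, and let W : Ω → ℝ be independent of G with law equal to the Gaussian measure with mean 0 and variance h. Then the conditional expectation satisfies, μ-almost everywhere, E[ e^{−κh}(√(x + 2αh) + (σ/2) W)² | G ] = e^{−κh} ( x + κθ h ). -/

import Mathlib

/-! Expand the square. Since `√(x + 2αh)` is `G`-measurable and `W` is independent of `G`, the
cross term has conditional mean `√(x + 2αh) · E[W] = 0` and the noise term has conditional mean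
`E[(σW/2)²] = σ²h/4`; the drift correction `2α + σ²/4 = κθ` then gives the result. -/

open MeasureTheory ProbabilityTheory
open scoped NNReal

namespace ProbabilityTheory

lemma integral_sq_gaussianReal_zero (v : ℝ≥0) : ∫ y, y ^ 2 ∂gaussianReal 0 v = v := by
  have h := variance_fun_id_gaussianReal (μ := 0) (v := v)
  rw [variance_eq_integral aemeasurable_id', integral_id_gaussianReal] at h
  simpa using h

variable {Ω : Type*} {mΩ : MeasurableSpace Ω} {P : Measure Ω} {X : Ω → ℝ} {v : ℝ≥0}

lemma HasLaw.memLp_two_of_gaussianReal {m : ℝ} (hX : HasLaw X (gaussianReal m v) P) :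
    MemLp X 2 P :=
  (hX.map_eq ▸ memLp_id_gaussianReal 2).comp_of_map hX.aemeasurable

lemma HasLaw.integral_sq_of_gaussianReal (hX : HasLaw X (gaussianReal 0 v) P) :
    ∫ ω, X ω ^ 2 ∂P = v := by
  rw [← integral_sq_gaussianReal_zero v, ← hX.integral_comp (by fun_prop)]
  rfl

end ProbabilityTheory

namespace MeasureTheory

theorem condExp_add_sq_of_indep {Ω : Type*} {m mΩ : MeasurableSpace Ω} {μ : Measure Ω}
    [IsFiniteMeasure μ] (hm : m ≤ mΩ) {f W : Ω → ℝ} (hf : StronglyMeasurable[m] f)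
    (hf2 : Integrable (fun ω => f ω ^ 2) μ) (hW : Measurable W) (hW2 : MemLp W 2 μ)
    (hindep : Indep (MeasurableSpace.comap W inferInstance) m μ) (hW0 : μ[W] = 0) :
    μ[fun ω => (f ω + W ω) ^ 2 | m] =ᵐ[μ] fun ω => f ω ^ 2 + ∫ ω, W ω ^ 2 ∂μ := by
  have hW_comap : StronglyMeasurable[MeasurableSpace.comap W inferInstance] W :=
    (Measurable.of_comap_le le_rfl).stronglyMeasurable
  have hfL2 : MemLp f 2 μ :=
    (memLp_two_iff_integrable_sq (hf.mono hm).aestronglyMeasurable).mpr hf2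
  have h2f : StronglyMeasurable[m] (2 * f) := hf.const_mul 2
  have hfW : Integrable (2 * f * W) μ := (hfL2.const_mul 2).integrable_mul hW2
  have hW2_int : Integrable (fun ω => W ω ^ 2) μ := hW2.integrable_sq
  have hcW : μ[W | m] =ᵐ[μ] fun _ => 0 := by
    rw [← hW0]
    exact condExp_indep_eq hW.comap_le hm hW_comap hindep
  have hcW2 : μ[fun ω => W ω ^ 2 | m] =ᵐ[μ] fun _ => ∫ ω, W ω ^ 2 ∂μ :=
    condExp_indep_eq hW.comap_le hm (hW_comap.pow 2) hindep
  have hcfW_zero : μ[2 * f * W | m] =ᵐ[μ] fun _ => 0 := by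
    filter_upwards [condExp_mul_of_stronglyMeasurable_left h2f hfW (hW2.integrable one_le_two),
      hcW] with ω h1 h2
    simp [h1, h2]
  have hexpand :
      (fun ω => (f ω + W ω) ^ 2) = (fun ω => f ω ^ 2) + 2 * f * W + fun ω => W ω ^ 2 := by
    ext ω; simp only [Pi.add_apply, Pi.mul_apply, Pi.ofNat_apply]; ring
  rw [hexpand]
  filter_upwards [condExp_add (hf2.add hfW) hW2_int m, condExp_add hf2 hfW m, hcfW_zero, hcW2]
    with ω h1 h2 h3 h4
  rw [h1, Pi.add_apply, h2, Pi.add_apply, h3, h4,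
    condExp_of_stronglyMeasurable hm (f := fun ω => f ω ^ 2) (hf.pow 2) hf2, add_zero]

end MeasureTheory

theorem splitting_one_step_condExp_general
    {Ω : Type*} {F : MeasurableSpace Ω} (μ : Measure Ω) [IsProbabilityMeasure μ]
    (G : MeasurableSpace Ω) (hG : G ≤ F)
    (κ θ σ α : ℝ)
    (hα : α = (4 * κ * θ - σ ^ 2) / 8) (hα0 : 0 ≤ α)
    (h : ℝ) (hh : 0 < h)
    (x : Ω → ℝ) (hx_meas : Measurable[G] x) (hx_nonneg : ∀ ω, 0 ≤ x ω)
    (hx_int : Integrable x μ)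
    (W : Ω → ℝ) (hW_meas : Measurable[F] W)
    (hW_indep : Indep (MeasurableSpace.comap W Real.measurableSpace) G μ)
    (hW_law : @Measure.map Ω ℝ F Real.measurableSpace W μ = gaussianReal 0 h.toNNReal) :
    μ[fun ω => Real.exp (-κ * h) * (Real.sqrt (x ω + 2 * α * h) + σ / 2 * W ω) ^ 2 | G]
      =ᵐ[μ] fun ω => Real.exp (-κ * h) * (x ω + κ * θ * h) := by
  have hsq : ∀ ω, √(x ω + 2 * α * h) ^ 2 = x ω + 2 * α * h := fun ω =>
    Real.sq_sqrt (by have := hx_nonneg ω; positivity)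
  have hV : HasLaw (fun ω => σ / 2 * W ω) _ μ :=
    gaussianReal_const_mul ⟨hW_meas.aemeasurable, hW_law⟩ (σ / 2)
  rw [mul_zero] at hV
  have hV_indep :
      Indep (MeasurableSpace.comap (fun ω => σ / 2 * W ω) Real.measurableSpace) G μ :=
    indep_of_indep_of_le_left hW_indep
      ((Measurable.of_comap_le le_rfl).const_mul (σ / 2)).comap_le
  have hcond := condExp_add_sq_of_indep hG
    (hx_meas.add_const _).sqrt.stronglyMeasurable
    ((hx_int.add (integrable_const _)).congr (.of_forall fun ω => (hsq ω).symm))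
    (hW_meas.const_mul _) hV.memLp_two_of_gaussianReal hV_indep
    (by rw [hV.integral_eq, integral_id_gaussianReal])
  rw [hV.integral_sq_of_gaussianReal] at hcond
  filter_upwards [condExp_smul (Real.exp (-κ * h))
    (fun ω => (√(x ω + 2 * α * h) + σ / 2 * W ω) ^ 2) G, hcond] with ω h1 h2
  refine h1.trans ?_
  rw [Pi.smul_apply, smul_eq_mul, h2, hsq, hα]
  push_cast
  rw [Real.coe_toNNReal _ hh.le]
  ring

/-- One-step conditional mean identity for the CIR splitting scheme: if `x` is
`G`-measurable, nonnegative and integrable, and `W` is independent of `G` with law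
`N(0, h)`, then `E[e^{−κh}(√(x + 2αh) + (σ/2)W)² | G] = e^{−κh}(x + κθh)` a.e. -/
theorem splitting_one_step_condExp
    {Ω : Type*} {F : MeasurableSpace Ω} (μ : Measure Ω) [IsProbabilityMeasure μ]
    (G : MeasurableSpace Ω) (hG : G ≤ F)
    (κ θ σ α : ℝ) (hκ : 0 < κ) (hθ : 0 < θ) (hσ : 0 < σ)
    (hα : α = (4 * κ * θ - σ ^ 2) / 8) (hα0 : 0 ≤ α)
    (h : ℝ) (hh : 0 < h)
    (x : Ω → ℝ) (hx_meas : Measurable[G] x) (hx_nonneg : ∀ ω, 0 ≤ x ω)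
    (hx_int : Integrable x μ)
    (W : Ω → ℝ) (hW_meas : Measurable[F] W)
    (hW_indep : Indep (MeasurableSpace.comap W Real.measurableSpace) G μ)
    (hW_law : @Measure.map Ω ℝ F Real.measurableSpace W μ = gaussianReal 0 h.toNNReal) :
    μ[fun ω => Real.exp (-κ * h) * (Real.sqrt (x ω + 2 * α * h) + σ / 2 * W ω) ^ 2 | G]
      =ᵐ[μ] fun ω => Real.exp (-κ * h) * (x ω + κ * θ * h) :=
  splitting_one_step_condExp_general μ G hG κ θ σ α hα hα0 h hh x hx_meas hx_nonneg hx_int W hW_meas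
    hW_indep hW_law
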